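/- arXiv:2106.14751 — 4 statements merged into one kernel-verified Lean document; each statement's English description precedes it below -/
import Mathlib

section
/- For every integer n ≥ 1, the Bell number of the second kind bel_n satisfies (-1)^(n-1) · bel_n = Σ_{k=1}^{n} (k-1)! · |s(n,k)|, where |s(n,k)| denotes the unsigned Stirling number of the first kind. -/
open PowerSeries Finset

noncomputable section

/-- Composition of formal power series (the standard composition when the inner
series `f` has zero constant term, since then `coeff n (f ^ k) = 0` for `k > n`). -/
def pcomp {R : Type*} [CommRing R] (g f : PowerSeries R) : PowerSeries R :=
  PowerSeries.mk fun n =>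
    ∑ k ∈ Finset.range (n + 1), PowerSeries.coeff k g * PowerSeries.coeff n (f ^ k)

/-- The formal power series `log(1+t)` over `ℚ`. -/
def Lq : PowerSeries ℚ := PowerSeries.mk fun n => if n = 0 then 0 else (-1) ^ (n + 1) / n

/-- The formal power series `-log(1-t)` over `ℚ`. -/
def Labs : PowerSeries ℚ := PowerSeries.mk fun n => if n = 0 then 0 else 1 / n

/-- Signed Stirling numbers of the first kind: `(log(1+t))^k / k! = Σ S₁(n,k) tⁿ/n!`. -/
def S1 (n k : ℕ) : ℚ := n.factorial / k.factorial * PowerSeries.coeff n (Lq ^ k)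

/-- Unsigned Stirling numbers of the first kind: `(-log(1-t))^k / k! = Σ |s(n,k)| tⁿ/n!`. -/
def uS1 (n k : ℕ) : ℚ := n.factorial / k.factorial * PowerSeries.coeff n (Labs ^ k)

/-- Stirling numbers of the second kind: `(eᵗ-1)^k / k! = Σ S₂(n,k) tⁿ/n!`. -/
def S2 (n k : ℕ) : ℚ :=
  n.factorial / k.factorial * PowerSeries.coeff n ((PowerSeries.exp ℚ - 1) ^ k)

/-- `λ^(n-1) * (1)_{n,1/λ} = ∏_{j=1}^{n-1} (λ - j)`. -/
def dc (l : ℚ) (n : ℕ) : ℚ := ∏ j ∈ Finset.Ico 1 n, (l - j)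

/-- Degenerate falling factorial `(1)_{n,λ} = ∏_{j=0}^{n-1} (1 - jλ)`. -/
def ffac (l : ℚ) (n : ℕ) : ℚ := ∏ j ∈ Finset.range n, (1 - j * l)

/-- Degenerate logarithm `log_λ(1+t) = Σ_{n≥1} λ^{n-1}(1)_{n,1/λ} tⁿ/n!`. -/
def Ld (l : ℚ) : PowerSeries ℚ :=
  PowerSeries.mk fun n => if n = 0 then 0 else dc l n / n.factorial

/-- Degenerate exponential `e_λ(t) = Σ_{n≥0} (1)_{n,λ} tⁿ/n!`. -/
def Ed (l : ℚ) : PowerSeries ℚ := PowerSeries.mk fun n => ffac l n / n.factorial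

/-- Degenerate Stirling numbers of the first kind. -/
def S1d (l : ℚ) (n k : ℕ) : ℚ :=
  n.factorial / k.factorial * PowerSeries.coeff n (Ld l ^ k)

/-- Degenerate Stirling numbers of the second kind. -/
def S2d (l : ℚ) (n k : ℕ) : ℚ :=
  n.factorial / k.factorial * PowerSeries.coeff n ((Ed l - 1) ^ k)

/-- Bell numbers of the second kind: `log(1 + log(1+t)) = Σ_{n≥1} bel_n tⁿ/n!`. -/
def belNum (n : ℕ) : ℚ := n.factorial * PowerSeries.coeff n (pcomp Lq Lq)

/-- Bell numbers of the second kind via the explicit formula. -/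
def belN (m : ℕ) : ℚ :=
  ∑ k ∈ Finset.Icc 1 m, (-1) ^ (k - 1) * (k - 1).factorial * S1 m k

/-- Bell polynomials of the second kind. -/
def belPoly (n : ℕ) : Polynomial ℚ :=
  ∑ k ∈ Finset.Icc 1 n,
    Polynomial.C ((-1) ^ (k - 1) * (k - 1).factorial * S1 n k) * Polynomial.X ^ k

/-- Bell polynomials of the second kind evaluated at `x : ℚ`. -/
def belVal (x : ℚ) (m : ℕ) : ℚ :=
  ∑ k ∈ Finset.Icc 1 m, (-1) ^ (k - 1) * (k - 1).factorial * S1 m k * x ^ k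

/-- Degenerate Bell numbers of the second kind via generating function. -/
def belNumD (l : ℚ) (n : ℕ) : ℚ := n.factorial * PowerSeries.coeff n (pcomp (Ld l) (Ld l))

/-- Degenerate Bell numbers of the second kind via the explicit formula. -/
def belND (l : ℚ) (m : ℕ) : ℚ := ∑ j ∈ Finset.Icc 1 m, dc l j * S1d l m j

/-- Degenerate Bell polynomials of the second kind. -/
def belPolyD (l : ℚ) (n : ℕ) : Polynomial ℚ :=
  ∑ k ∈ Finset.Icc 1 n, Polynomial.C (dc l k * S1d l n k) * Polynomial.X ^ k

/-- `log(1+t)` as a power series over `ℚ[x]`. -/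
def LqP : PowerSeries (Polynomial ℚ) :=
  PowerSeries.mk fun n => if n = 0 then 0 else Polynomial.C ((-1) ^ (n + 1) / n : ℚ)

/-- `-log(1-t)` as a power series over `ℚ[x]`. -/
def LabsP : PowerSeries (Polynomial ℚ) :=
  PowerSeries.mk fun n => if n = 0 then 0 else Polynomial.C (1 / n : ℚ)

/-- `log(1-t)` as a power series over `ℚ[x]`. -/
def MP : PowerSeries (Polynomial ℚ) :=
  PowerSeries.mk fun n => if n = 0 then 0 else Polynomial.C (-(1 / n) : ℚ)

/-- `log_λ(1+t)` as a power series over `ℚ[x]`. -/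
def LdP (l : ℚ) : PowerSeries (Polynomial ℚ) :=
  PowerSeries.mk fun n => if n = 0 then 0 else Polynomial.C (dc l n / n.factorial)

/-- The polylogarithm `Li_k(y) = Σ_{m≥1} yᵐ/mᵏ` as a power series over `ℚ[x]`. -/
def LiP (k : ℤ) : PowerSeries (Polynomial ℚ) :=
  PowerSeries.mk fun m => if m = 0 then 0 else Polynomial.C (((m : ℚ) ^ k)⁻¹)

/-- The degenerate polylogarithm `Li_{k,λ}` as a power series over `ℚ[x]`. -/
def LidP (l : ℚ) (k : ℤ) : PowerSeries (Polynomial ℚ) :=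
  PowerSeries.mk fun m => if m = 0 then 0 else
    Polynomial.C ((-1) ^ (m - 1) * dc l m / ((m - 1).factorial * (m : ℚ) ^ k))

/-- `-x · log(1-t)` over `ℚ[x]`. -/
def innerP : PowerSeries (Polynomial ℚ) := PowerSeries.C Polynomial.X * LabsP

/-- `-x · log_λ(1-t)` over `ℚ[x]`. -/
def innerD (l : ℚ) : PowerSeries (Polynomial ℚ) :=
  PowerSeries.C Polynomial.X *
    PowerSeries.mk fun n => if n = 0 then 0 else
      Polynomial.C ((-1) ^ (n + 1) * dc l n / n.factorial)

/-- Poly-Bell polynomials of the second kind via generating function. -/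
def polyBellP (k : ℤ) (n : ℕ) : Polynomial ℚ :=
  (n.factorial : ℚ) • PowerSeries.coeff n (pcomp (LiP k) innerP)

/-- Poly-Bell polynomials of the second kind via the explicit formula. -/
def belPk (k : ℤ) (n : ℕ) : Polynomial ℚ :=
  ∑ l ∈ Finset.Icc 1 n,
    Polynomial.C ((((l : ℚ) ^ (k - 1))⁻¹) * (l - 1).factorial * uS1 n l) * Polynomial.X ^ l

/-- Degenerate poly-Bell polynomials of the second kind via generating function. -/
def belDPk (l : ℚ) (k : ℤ) (n : ℕ) : Polynomial ℚ :=
  (n.factorial : ℚ) • PowerSeries.coeff n (pcomp (LidP l k) (innerD l))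

/-- Degenerate poly-Bell polynomials of the second kind via the explicit formula. -/
def belE (l : ℚ) (k : ℤ) (m : ℕ) : Polynomial ℚ :=
  (-1 : Polynomial ℚ) ^ (m - 1) *
    ∑ j ∈ Finset.Icc 1 m,
      Polynomial.C ((((j : ℚ) ^ (k - 1))⁻¹) * dc l j * S1d l m j) * Polynomial.X ^ j

/-! Composing with `log(1+t)`, whose `k`-th coefficient is `(-1)^(k-1)/k`, turns
`bel_n = Σ_k [t^k] log(1+t) · n! [t^n] (log(1+t))^k` into `Σ_k (-1)^(k-1) (k-1)! S₁(n,k)`.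
Since `log(1+t)` is `-log(1-t)` with `t ↦ -t` and an overall sign,
`S₁(n,k) = (-1)^(n+k) |s(n,k)|`, and all signs collapse to `(-1)^(n-1)`. -/

lemma coeff_zero_Lq : coeff 0 Lq = 0 := by
  simp [Lq]

lemma coeff_Lq_of_ne_zero {k : ℕ} (hk : k ≠ 0) : coeff k Lq = (-1) ^ (k + 1) / k := by
  simp [Lq, hk]

lemma Lq_eq_neg_rescale_Labs : Lq = -rescale (-1) Labs := by
  ext n
  simp only [Lq, Labs, coeff_mk, coeff_rescale, map_neg]
  split_ifs
  · simp
  · ring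

lemma coeff_Lq_pow (n k : ℕ) : coeff n (Lq ^ k) = (-1) ^ (n + k) * coeff n (Labs ^ k) := by
  rw [Lq_eq_neg_rescale_Labs, neg_pow, ← map_pow, ← map_one (C (R := ℚ)), ← map_neg, ← map_pow,
    coeff_C_mul, coeff_rescale]
  ring

lemma S1_eq_neg_one_pow_mul_uS1 (n k : ℕ) : S1 n k = (-1) ^ (n + k) * uS1 n k := by
  rw [S1, uS1, coeff_Lq_pow]
  ring

lemma belNum_eq_belN (n : ℕ) : belNum n = belN n := by
  rw [belNum, belN, pcomp, coeff_mk, range_eq_Ico, sum_eq_sum_Ico_succ_bot n.succ_pos,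
    coeff_zero_Lq, zero_mul, zero_add, zero_add, Nat.succ_eq_add_one, Ico_add_one_right_eq_Icc,
    mul_sum]
  refine sum_congr rfl fun k hk => ?_
  obtain ⟨j, rfl⟩ : ∃ j, k = j + 1 := Nat.exists_eq_add_of_le' (mem_Icc.1 hk).1
  rw [S1, coeff_Lq_of_ne_zero (Nat.add_one_ne_zero j), Nat.add_sub_cancel, Nat.factorial_succ]
  push_cast
  field_simp
  ring

lemma belN_eq_neg_one_pow_mul_sum_uS1 (n : ℕ) :
    belN n = (-1) ^ (n - 1) * ∑ k ∈ Icc 1 n, ((k - 1).factorial : ℚ) * uS1 n k := by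
  rw [belN, mul_sum]
  refine sum_congr rfl fun k hk => ?_
  obtain ⟨hk1, hkn⟩ := mem_Icc.1 hk
  have hsign : (-1 : ℚ) ^ (k - 1) * (-1) ^ (n + k) = (-1) ^ (n - 1) := by
    rw [← pow_add, show k - 1 + (n + k) = n - 1 + 2 * k by omega, pow_add, pow_mul, neg_one_sq,
      one_pow, mul_one]
  rw [S1_eq_neg_one_pow_mul_uS1, ← hsign]
  ring

theorem stmt0_general (n : ℕ) :
    (-1 : ℚ) ^ (n - 1) * belNum n =
      ∑ k ∈ Finset.Icc 1 n, ((k - 1).factorial : ℚ) * uS1 n k := by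
  rw [belNum_eq_belN, belN_eq_neg_one_pow_mul_sum_uS1, ← mul_assoc, ← pow_add, ← two_mul,
    pow_mul, neg_one_sq, one_pow, one_mul]

theorem stmt0 (n : ℕ) (hn : 1 ≤ n) :
    (-1 : ℚ) ^ (n - 1) * belNum n =
      ∑ k ∈ Finset.Icc 1 n, ((k - 1).factorial : ℚ) * uS1 n k :=
  stmt0_general n

end
end

section
/- For every integer n ≥ 0, Σ_{k=0}^{n} bel_{k+1}(-1) · S₂(n,k) = -d_n, where d_n is the number of derangements of n elements. -/
/-!
Let `L` be the linear functional `L(p) = ∫₀^∞ p(t) e⁻ᵗ dt` on `ℚ[x]`, so `L(xⁱ) = i!`.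
Since `Σₖ S₁(m,k) xᵏ = (x)ₘ` and `(x)ₖ₊₁ = x (x-1)ₖ`, we get
`bel_{k+1}(-1) = -Σⱼ (j-1)! S₁(k+1,j) = -L((x-1)ₖ)`, and `Σₖ S₂(n,k) (y)ₖ = yⁿ` at `y = x - 1`
turns the sum into `-L((x-1)ⁿ)`. Integration by parts, `L(p) = p(0) + L(p')`, gives
`L((x-1)ⁿ⁺¹) = (n+1) L((x-1)ⁿ) + (-1)ⁿ⁺¹`, the recurrence of the derangement numbers.

The two Stirling identities follow from the recurrences obtained by differentiating
`f^(k+1) / (k+1)!`, whose derivative is `f^k/k! · f'`, for `f = log(1+t)`, where `(1+t) f' = 1`,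
and `f = eᵗ - 1`, where `f' = f + 1`.
-/

open PowerSeries Finset

noncomputable section

section ExpPowerCoeff

variable {K : Type*} [Field K]

def expPowerCoeff (f : K⟦X⟧) (n k : ℕ) : K := n.factorial / k.factorial * coeff n (f ^ k)

theorem expPowerCoeff_zero_left {f : K⟦X⟧} (hf : constantCoeff f = 0) (k : ℕ) :
    expPowerCoeff f 0 k = if k = 0 then 1 else 0 := by
  cases k <;> simp [expPowerCoeff, hf]

theorem expPowerCoeff_succ_zero (f : K⟦X⟧) (n : ℕ) : expPowerCoeff f (n + 1) 0 = 0 := by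
  simp [expPowerCoeff, coeff_one]

theorem expPowerCoeff_eq_zero_of_lt {f : K⟦X⟧} (hf : constantCoeff f = 0) {n k : ℕ}
    (h : n < k) : expPowerCoeff f n k = 0 := by
  have : X ^ k ∣ f ^ k := pow_dvd_pow_of_dvd (X_dvd_iff.mpr hf) k
  rw [expPowerCoeff, X_pow_dvd_iff.mp this n h, mul_zero]

theorem expPowerCoeff_succ_succ [CharZero K] (f : K⟦X⟧) (n k : ℕ) :
    expPowerCoeff f (n + 1) (k + 1) = n.factorial / k.factorial * coeff n (f ^ k * d⁄dX K f) := by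
  have h := coeff_derivative (f ^ (k + 1)) n
  rw [Derivation.leibniz_pow, Nat.add_sub_cancel, nsmul_eq_mul, smul_eq_mul,
    ← map_natCast (C (R := K)), coeff_C_mul] at h
  rw [expPowerCoeff, Nat.factorial_succ, Nat.factorial_succ]
  have hk : (k.factorial : K) ≠ 0 := Nat.cast_ne_zero.mpr k.factorial_ne_zero
  have hk1 : (k : K) + 1 ≠ 0 := Nat.cast_add_one_ne_zero k
  push_cast at h ⊢
  field_simp
  linear_combination (n.factorial : K) * h.symm

end ExpPowerCoeff

theorem S1_eq_expPowerCoeff : S1 = expPowerCoeff Lq := rfl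

theorem constantCoeff_Lq : constantCoeff Lq = 0 := by
  simp [Lq, ← coeff_zero_eq_constantCoeff_apply]

theorem one_add_X_mul_derivative_Lq : (1 + X) * d⁄dX ℚ Lq = 1 := by
  ext n
  rw [add_mul, one_mul, map_add]
  cases n with
  | zero => simp [Lq, coeff_derivative]
  | succ n =>
    rw [coeff_succ_X_mul, coeff_derivative, coeff_derivative, coeff_one]
    simp only [Lq, coeff_mk, Nat.add_one_ne_zero, if_false]
    push_cast
    field_simp
    ring

theorem S1_succ_succ (n k : ℕ) : S1 (n + 1) (k + 1) = S1 n k - n * S1 n (k + 1) := by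
  set g := Lq ^ k * d⁄dX ℚ Lq
  have hLq : Lq ^ k = g + X * g := by
    linear_combination (-Lq ^ k) * one_add_X_mul_derivative_Lq
  have hS1 : ∀ m, S1 (m + 1) (k + 1) = m.factorial / k.factorial * coeff m g := fun m => by
    rw [S1_eq_expPowerCoeff, expPowerCoeff_succ_succ]
  rw [hS1, S1, hLq, map_add]
  cases n with
  | zero => simp
  | succ n =>
    rw [coeff_succ_X_mul, hS1, Nat.factorial_succ]
    push_cast
    ring

theorem S1_eq_coeff_descPochhammer (n k : ℕ) : S1 n k = (descPochhammer ℚ n).coeff k := by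
  induction n generalizing k with
  | zero =>
    rw [S1_eq_expPowerCoeff, expPowerCoeff_zero_left constantCoeff_Lq, descPochhammer_zero,
      Polynomial.coeff_one]
  | succ n ih =>
    cases k with
    | zero =>
      rw [S1_eq_expPowerCoeff, expPowerCoeff_succ_zero, descPochhammer_succ_left,
        Polynomial.coeff_X_mul_zero]
    | succ k =>
      rw [S1_succ_succ, ih, ih, descPochhammer_succ_right, ← Polynomial.C_eq_natCast,
        Polynomial.coeff_mul_X_sub_C, mul_comm]

theorem constantCoeff_exp_sub_one : constantCoeff (exp ℚ - 1) = 0 := by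
  simp

theorem S2_eq_expPowerCoeff : S2 = expPowerCoeff (exp ℚ - 1) := rfl

theorem S2_succ_succ (n k : ℕ) : S2 (n + 1) (k + 1) = (k + 1) * S2 n (k + 1) + S2 n k := by
  have hE : (exp ℚ - 1) ^ k * d⁄dX ℚ (exp ℚ - 1) = (exp ℚ - 1) ^ (k + 1) + (exp ℚ - 1) ^ k := by
    rw [map_sub, derivative_exp, Derivation.map_one_eq_zero]
    ring
  rw [S2_eq_expPowerCoeff, expPowerCoeff_succ_succ, hE, map_add, expPowerCoeff, expPowerCoeff,
    Nat.factorial_succ]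
  push_cast
  field_simp

theorem sum_S2_smul_descPochhammer (n : ℕ) :
    ∑ k ∈ range (n + 1), S2 n k • descPochhammer ℚ k = Polynomial.X ^ n := by
  induction n with
  | zero => simp [S2]
  | succ n ih =>
    have hX : ∀ k : ℕ, Polynomial.X * descPochhammer ℚ k
        = descPochhammer ℚ (k + 1) + (k : ℚ) • descPochhammer ℚ k := fun k => by
      rw [descPochhammer_succ_right, Polynomial.smul_eq_C_mul, map_natCast]
      ring
    set f : ℕ → Polynomial ℚ := fun k => ((k : ℚ) * S2 n k) • descPochhammer ℚ k
    have hshift : ∑ k ∈ range (n + 1), f (k + 1) = ∑ k ∈ range (n + 1), f k := by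
      have h := (Finset.sum_range_succ' f (n + 1)).symm.trans (Finset.sum_range_succ f (n + 1))
      rwa [show f 0 = 0 by simp [f], show f (n + 1) = 0 by
        simp [f, S2_eq_expPowerCoeff, expPowerCoeff_eq_zero_of_lt constantCoeff_exp_sub_one],
        add_zero, add_zero] at h
    rw [pow_succ', ← ih, Finset.mul_sum, Finset.sum_range_succ', S2_eq_expPowerCoeff,
      expPowerCoeff_succ_zero, zero_smul, add_zero, ← S2_eq_expPowerCoeff]
    simp only [S2_succ_succ, add_smul, Finset.sum_add_distrib, mul_smul_comm, hX, smul_add]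
    rw [add_comm]
    congr 1
    convert hshift using 2 with k
    · simp [f]
    · simp only [f, smul_smul, mul_comm]

section FactorialMoment

variable {R : Type*} [CommRing R]

def factorialMoment : Polynomial R →ₗ[R] R :=
  Polynomial.lsum fun i => (i.factorial : R) • LinearMap.id

theorem factorialMoment_apply (p : Polynomial R) :
    factorialMoment p = p.sum fun i a => (i.factorial : R) * a := rfl

theorem factorialMoment_monomial (i : ℕ) (a : R) :
    factorialMoment (Polynomial.monomial i a) = i.factorial * a := by
  simp [factorialMoment_apply]

theorem factorialMoment_C (a : R) : factorialMoment (Polynomial.C a) = a := by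
  rw [← Polynomial.monomial_zero_left, factorialMoment_monomial, Nat.factorial_zero, Nat.cast_one,
    one_mul]

theorem factorialMoment_eq_eval_zero_add_derivative (p : Polynomial R) :
    factorialMoment p = p.eval 0 + factorialMoment (Polynomial.derivative p) := by
  induction p using Polynomial.induction_on' with
  | add p q hp hq => simp only [map_add, Polynomial.eval_add, hp, hq]; ring
  | monomial i a =>
    cases i with
    | zero => simp [factorialMoment_C]
    | succ i =>
      rw [Polynomial.derivative_monomial, factorialMoment_monomial, factorialMoment_monomial,
        Nat.add_sub_cancel, Nat.factorial_succ]
      simp only [Polynomial.eval_monomial, Nat.cast_mul, Nat.cast_add, Nat.cast_one, ne_eq,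
        Nat.add_eq_zero_iff, one_ne_zero, and_false, not_false_eq_true, zero_pow, mul_zero, zero_add]
      ring

theorem factorialMoment_X_sub_one_pow (n : ℕ) :
    factorialMoment ((Polynomial.X - 1 : Polynomial R) ^ n) = numDerangements n := by
  induction n with
  | zero => simpa using factorialMoment_C (1 : R)
  | succ n ih =>
    have hd := congrArg (Int.cast : ℤ → R) (numDerangements_succ n)
    push_cast at hd
    rw [factorialMoment_eq_eval_zero_add_derivative, hd, ← Polynomial.C_1,
      Polynomial.derivative_X_sub_C_pow, Nat.add_sub_cancel, ← Polynomial.smul_eq_C_mul,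
      map_smul, Polynomial.C_1, ih]
    simp only [Polynomial.eval_pow, Polynomial.eval_sub, Polynomial.eval_X, Polynomial.eval_one,
      zero_sub, Nat.cast_add, Nat.cast_one, smul_eq_mul]
    ring

end FactorialMoment

theorem belVal_neg_one_succ (k : ℕ) :
    belVal (-1) (k + 1) = -factorialMoment ((descPochhammer ℚ k).comp (Polynomial.X - 1)) := by
  have hdeg : ((descPochhammer ℚ k).comp (Polynomial.X - 1)).natDegree < k + 1 := by
    rw [Polynomial.natDegree_comp, descPochhammer_natDegree, ← Polynomial.C_1,
      Polynomial.natDegree_X_sub_C, mul_one]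
    exact k.lt_succ_self
  rw [factorialMoment_apply, Polynomial.sum_over_range' _ (fun _ => mul_zero _) _ hdeg, belVal,
    ← Finset.Ico_add_one_right_eq_Icc, Finset.sum_Ico_eq_sum_range, ← Finset.sum_neg_distrib]
  refine Finset.sum_congr (by simp) fun i _ => ?_
  rw [S1_eq_coeff_descPochhammer, add_comm 1 i, descPochhammer_succ_left, Polynomial.coeff_X_mul,
    Nat.add_sub_cancel, pow_succ]
  have hsign : (-1 : ℚ) ^ i * (-1) ^ i = 1 := by
    rw [← pow_add, ← two_mul, pow_mul, neg_one_sq, one_pow]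
  linear_combination
    -(i.factorial : ℚ) * ((descPochhammer ℚ k).comp (Polynomial.X - 1)).coeff i * hsign

theorem stmt2 (n : ℕ) :
    ∑ k ∈ Finset.range (n + 1), belVal (-1) (k + 1) * S2 n k = -(numDerangements n : ℚ) := by
  have hcomp := congrArg (fun p => p.comp (Polynomial.X - 1 : Polynomial ℚ))
    (sum_S2_smul_descPochhammer n)
  simp only [Polynomial.sum_comp, Polynomial.smul_comp, Polynomial.X_pow_comp] at hcomp
  calc ∑ k ∈ range (n + 1), belVal (-1) (k + 1) * S2 n k
      = -factorialMoment
          (∑ k ∈ range (n + 1), S2 n k • (descPochhammer ℚ k).comp (Polynomial.X - 1)) := by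
        rw [map_sum, ← Finset.sum_neg_distrib]
        refine Finset.sum_congr rfl fun k _ => ?_
        rw [belVal_neg_one_succ, map_smul, smul_eq_mul]
        ring
    _ = -(numDerangements n : ℚ) := by rw [hcomp, factorialMoment_X_sub_one_pow]

end
end

section
/- For every integer n ≥ 1, λ^(n-1) (1)_{n,1/λ} x^n = Σ_{k=1}^{n} bel_{k,λ}(x) S_{2,λ}(n,k), as an identity of polynomials in x. -/
open PowerSeries Finset

noncomputable section

/-!
The orthogonality `Σ_k S_{1,λ}(k,j) S_{2,λ}(n,k) = δ_{nj}` is the coefficient form of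
`log_λ(1 + (e_λ(t) - 1)) = t`, so swapping the two sums in `Σ_k bel_{k,λ}(x) S_{2,λ}(n,k)`
leaves only the term `j = n`. The inverse relation itself comes from the first-order equations
`(1 + λt) e_λ' = e_λ` and `(1 + t) log_λ'(1 + t) = 1 + λ log_λ(1 + t)`: by the chain rule the
composite `H` satisfies `(1 + λt) H' = 1 + λH` with `H(0) = 0`, whose only solution is `t`.
-/

theorem coeff_pow_eq_zero_of_lt {R : Type*} [CommRing R] {f : R⟦X⟧}
    (hf : constantCoeff f = 0) {n k : ℕ} (hnk : n < k) : coeff n (f ^ k) = 0 :=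
  coeff_of_lt_order n <|
    (Nat.cast_lt.mpr hnk).trans_le (le_order_pow_of_constantCoeff_eq_zero k hf)

theorem pcomp_eq_subst {R : Type*} [CommRing R] (g : R⟦X⟧) {f : R⟦X⟧}
    (hf : constantCoeff f = 0) : pcomp g f = g.subst f := by
  ext n
  rw [coeff_subst' (HasSubst.of_constantCoeff_zero' hf), pcomp, coeff_mk,
    finsum_eq_sum_of_support_subset (s := range (n + 1))]
  · simp only [smul_eq_mul]
  · intro k hk
    rw [Function.mem_support] at hk
    rw [coe_range, Set.mem_Iio, Nat.lt_succ_iff]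
    by_contra! h
    exact hk (by rw [coeff_pow_eq_zero_of_lt hf h, smul_zero])

theorem eq_zero_of_one_add_C_mul_X_mul_derivative_eq {K : Type*} [Field K] [CharZero K]
    {a b : K} {D : K⟦X⟧} (h0 : constantCoeff D = 0)
    (h : (1 + C a * X) * d⁄dX K D = C b * D) : D = 0 := by
  ext n
  induction n with
  | zero => simpa using h0
  | succ n ih =>
    have hn := congrArg (coeff n) h
    rw [add_mul, one_mul, map_add, mul_assoc, coeff_C_mul, coeff_C_mul, coeff_derivative] at hn
    cases n with
    | zero => simpa [ih] using hn
    | succ m =>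
      rw [coeff_succ_X_mul, coeff_derivative, ih] at hn
      simp only [map_zero, zero_mul, mul_zero, add_zero, mul_eq_zero] at hn
      exact hn.resolve_right (Nat.cast_add_one_ne_zero (m + 1))

theorem eq_X_of_one_add_C_mul_X_mul_derivative_eq {K : Type*} [Field K] [CharZero K]
    {a : K} {H : K⟦X⟧} (h0 : constantCoeff H = 0)
    (h : (1 + C a * X) * d⁄dX K H = 1 + C a * H) : H = X := by
  rw [← sub_eq_zero]
  refine eq_zero_of_one_add_C_mul_X_mul_derivative_eq (a := a) (b := a) (by simp [h0]) ?_
  rw [map_sub, derivative_X]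
  linear_combination h

section

variable (l : ℚ)

theorem ffac_succ (n : ℕ) : ffac l (n + 1) = ffac l n * (1 - n * l) :=
  prod_range_succ _ n

theorem dc_succ {n : ℕ} (hn : 1 ≤ n) : dc l (n + 1) = dc l n * (l - n) :=
  prod_Ico_succ_top hn _

theorem constantCoeff_Ld : constantCoeff (Ld l) = 0 := by
  rw [← coeff_zero_eq_constantCoeff_apply]; simp [Ld]

theorem constantCoeff_Ed_sub_one : constantCoeff (Ed l - 1) = 0 := by
  rw [← coeff_zero_eq_constantCoeff_apply]; simp [Ed, ffac]

theorem one_add_C_mul_X_mul_derivative_Ed :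
    (1 + C l * X) * d⁄dX ℚ (Ed l) = Ed l := by
  ext n
  rw [add_mul, one_mul, map_add, mul_assoc, coeff_C_mul]
  cases n with
  | zero => simp [coeff_derivative, Ed, ffac]
  | succ m =>
    rw [coeff_succ_X_mul, coeff_derivative, coeff_derivative]
    simp only [Ed, coeff_mk, ffac_succ, Nat.factorial_succ]
    field_simp
    push_cast
    ring

theorem one_add_X_mul_derivative_Ld :
    (1 + X) * d⁄dX ℚ (Ld l) = 1 + C l * Ld l := by
  ext n
  rw [add_mul, one_mul, map_add, map_add, coeff_C_mul]
  cases n with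
  | zero => simp [coeff_derivative, Ld, dc]
  | succ m =>
    rw [coeff_succ_X_mul, coeff_derivative, coeff_derivative]
    simp only [Ld, coeff_mk, Nat.succ_ne_zero, if_false, coeff_one]
    rw [dc_succ l (by omega : 1 ≤ m + 1), Nat.factorial_succ (m + 1), Nat.factorial_succ m]
    field_simp
    push_cast
    ring

theorem Ld_subst_Ed_sub_one : (Ld l).subst (Ed l - 1) = X := by
  have hG : HasSubst (Ed l - 1) := HasSubst.of_constantCoeff_zero' (constantCoeff_Ed_sub_one l)
  set φ := substAlgHom (R := ℚ) hG
  have hφ : ∀ f : ℚ⟦X⟧, f.subst (Ed l - 1) = φ f := fun f => by rw [coe_substAlgHom]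
  apply eq_X_of_one_add_C_mul_X_mul_derivative_eq (a := l)
  · exact constantCoeff_subst_eq_zero (constantCoeff_Ed_sub_one l) _ (constantCoeff_Ld l)
  · rw [derivative_subst hG, hφ, hφ]
    calc (1 + C l * X) * (φ (d⁄dX ℚ (Ld l)) * d⁄dX ℚ (Ed l - 1))
        = φ (d⁄dX ℚ (Ld l)) * ((1 + C l * X) * d⁄dX ℚ (Ed l)) := by
          rw [map_sub, Derivation.map_one_eq_zero, sub_zero]; ring
      _ = φ ((1 + X) * d⁄dX ℚ (Ld l)) := by
          rw [one_add_C_mul_X_mul_derivative_Ed, map_mul, map_add, map_one, substAlgHom_X]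
          ring
      _ = 1 + C l * φ (Ld l) := by
          rw [one_add_X_mul_derivative_Ld, map_add, map_one, C_eq_algebraMap, map_mul,
            AlgHom.commutes]

theorem S1d_eq_zero_of_lt {k j : ℕ} (hkj : k < j) : S1d l k j = 0 := by
  rw [S1d, coeff_pow_eq_zero_of_lt (constantCoeff_Ld l) hkj, mul_zero]

theorem sum_range_S1d_mul_S2d (n j : ℕ) :
    ∑ k ∈ range (n + 1), S1d l k j * S2d l n k = if n = j then 1 else 0 := by
  have hterm : ∀ k, S1d l k j * S2d l n k =
      n.factorial / j.factorial * (coeff k (Ld l ^ j) * coeff n ((Ed l - 1) ^ k)) := by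
    intro k
    rw [S1d, S2d]
    field_simp
  have hcomp : ∑ k ∈ range (n + 1), coeff k (Ld l ^ j) * coeff n ((Ed l - 1) ^ k) =
      coeff n ((X : ℚ⟦X⟧) ^ j) := by
    rw [← Ld_subst_Ed_sub_one, ← subst_pow (HasSubst.of_constantCoeff_zero'
      (constantCoeff_Ed_sub_one l)), ← pcomp_eq_subst _ (constantCoeff_Ed_sub_one l), pcomp,
      coeff_mk]
  simp only [hterm, ← mul_sum, hcomp, coeff_X_pow]
  split_ifs with h
  · subst h; simp [Nat.factorial_ne_zero]
  · simp

theorem sum_Icc_S1d_mul_S2d (n : ℕ) {j : ℕ} (hj : 1 ≤ j) :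
    ∑ k ∈ Icc 1 n, S1d l k j * S2d l n k = if n = j then 1 else 0 := by
  rw [← sum_range_S1d_mul_S2d l n j, range_eq_Ico, sum_eq_sum_Ico_succ_bot n.succ_pos,
    zero_add, Nat.succ_eq_add_one, Ico_add_one_right_eq_Icc, S1d_eq_zero_of_lt l hj, zero_mul,
    zero_add]

theorem belPolyD_eq_sum_Icc_of_le {k n : ℕ} (hkn : k ≤ n) :
    belPolyD l k = ∑ j ∈ Icc 1 n, Polynomial.C (dc l j * S1d l k j) * Polynomial.X ^ j := by
  refine sum_subset (Icc_subset_Icc_right hkn) fun j hjn hjk => ?_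
  have hkj : k < j := by simp only [mem_Icc] at hjn hjk; omega
  simp [S1d_eq_zero_of_lt l hkj]

end

theorem stmt10 (l : ℚ) (n : ℕ) (hn : 1 ≤ n) :
    Polynomial.C (dc l n) * (Polynomial.X : Polynomial ℚ) ^ n =
      ∑ k ∈ Finset.Icc 1 n, belPolyD l k * Polynomial.C (S2d l n k) := by
  calc Polynomial.C (dc l n) * Polynomial.X ^ n
      = ∑ j ∈ Icc 1 n, Polynomial.C (dc l j * if n = j then 1 else 0) * Polynomial.X ^ j := by
        rw [sum_eq_single_of_mem n (mem_Icc.mpr ⟨hn, le_rfl⟩)]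
        · simp
        · intro j _ hjn
          simp [Ne.symm hjn]
    _ = ∑ j ∈ Icc 1 n, ∑ k ∈ Icc 1 n,
          Polynomial.C (dc l j * S1d l k j) * Polynomial.X ^ j * Polynomial.C (S2d l n k) := by
        refine sum_congr rfl fun j hj => ?_
        rw [← sum_Icc_S1d_mul_S2d l n (mem_Icc.mp hj).1, mul_sum, map_sum, sum_mul]
        refine sum_congr rfl fun k _ => ?_
        simp only [map_mul]
        ring
    _ = ∑ k ∈ Icc 1 n, belPolyD l k * Polynomial.C (S2d l n k) := by
        rw [sum_comm]
        refine sum_congr rfl fun k hk => ?_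
        rw [belPolyD_eq_sum_Icc_of_le l (mem_Icc.mp hk).2, sum_mul]

end
end

section
/- For every integers n ≥ 1 and k, the poly-Bell polynomial of the second kind satisfies bel_n^{(k)}(x) = Σ_{l=1}^{n} (x^l / l^(k-1)) · (l-1)! · |s(n,l)|, where |s(n,l)| is the unsigned Stirling number of the first kind. -/
open PowerSeries Finset

noncomputable section

/-! Writing `L = -log(1-t)`, the composite is `Li_k(xL) = Σ_{l≥1} xˡ Lˡ / lᵏ`, and `Lˡ/l!` is the
generating function of `|s(n,l)|`; the weight `l!/lᵏ = (l-1)!/l^(k-1)` gives the formula. -/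

lemma coeff_pcomp_of_constantCoeff_eq_zero {R : Type*} [CommRing R] {g : PowerSeries R}
    (hg : constantCoeff g = 0) (f : PowerSeries R) (n : ℕ) :
    coeff n (pcomp g f) = ∑ j ∈ Icc 1 n, coeff j g * coeff n (f ^ j) := by
  rw [pcomp, PowerSeries.coeff_mk, Finset.range_eq_Ico, Finset.sum_eq_sum_Ico_succ_bot
    (Nat.succ_pos n), PowerSeries.coeff_zero_eq_constantCoeff_apply, hg, zero_mul, zero_add]
  rfl

lemma constantCoeff_LiP (k : ℤ) : constantCoeff (LiP k) = 0 := by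
  simp [LiP, ← PowerSeries.coeff_zero_eq_constantCoeff_apply]

lemma LabsP_eq_map : LabsP = PowerSeries.map Polynomial.C Labs := by
  ext n
  simp [LabsP, Labs, PowerSeries.coeff_map, apply_ite Polynomial.C]

lemma coeff_innerP_pow (n j : ℕ) :
    coeff n (innerP ^ j) = Polynomial.X ^ j * Polynomial.C (coeff n (Labs ^ j)) := by
  rw [innerP, mul_pow, ← map_pow, PowerSeries.coeff_C_mul, LabsP_eq_map, ← map_pow,
    PowerSeries.coeff_map]

lemma factorial_mul_coeff_Labs_pow (n j : ℕ) :
    (n.factorial : ℚ) * coeff n (Labs ^ j) = j.factorial * uS1 n j := by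
  have := j.factorial_ne_zero
  rw [uS1]
  field_simp

lemma zpow_inv_mul_factorial {j : ℕ} (hj : 1 ≤ j) (k : ℤ) :
    ((j : ℚ) ^ k)⁻¹ * j.factorial = ((j : ℚ) ^ (k - 1))⁻¹ * (j - 1).factorial := by
  obtain ⟨m, rfl⟩ := Nat.exists_eq_add_of_le' hj
  have hm : ((m + 1 : ℕ) : ℚ) ≠ 0 := by positivity
  rw [Nat.add_sub_cancel, Nat.factorial_succ, Nat.cast_mul, zpow_sub_one₀ hm, mul_inv,
    inv_inv]
  field_simp

theorem stmt12_general (k : ℤ) (n : ℕ) :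
    polyBellP k n =
      ∑ l ∈ Finset.Icc 1 n,
        Polynomial.C ((((l : ℚ) ^ (k - 1))⁻¹) * (l - 1).factorial * uS1 n l) *
          Polynomial.X ^ l := by
  rw [polyBellP, coeff_pcomp_of_constantCoeff_eq_zero (constantCoeff_LiP k), smul_sum]
  refine sum_congr rfl fun j hj => ?_
  have hj1 : 1 ≤ j := (mem_Icc.mp hj).1
  rw [LiP, PowerSeries.coeff_mk, if_neg (by omega), coeff_innerP_pow, Polynomial.smul_eq_C_mul,
    ← zpow_inv_mul_factorial hj1, mul_assoc, ← factorial_mul_coeff_Labs_pow]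
  simp only [map_mul]
  ring

theorem stmt12 (k : ℤ) (n : ℕ) (hn : 1 ≤ n) :
    polyBellP k n =
      ∑ l ∈ Finset.Icc 1 n,
        Polynomial.C ((((l : ℚ) ^ (k - 1))⁻¹) * (l - 1).factorial * uS1 n l) *
          Polynomial.X ^ l :=
  stmt12_general k n
end
end
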